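/- arXiv:2012.15502 — 3 statements merged into one kernel-verified Lean document; each statement's English description precedes it below -/
import Mathlib

section
/- Let G be a finite d-regular graph, v a vertex, and s ≥ 1 an integer. Then the number of connected vertex subsets of G of size s containing v is at most (4d)^{s-1}. -/
/-!
Root a connected set `S` at `v`. If `|S| ≥ 2`, pick a neighbour `u` of `v` in `S`; the vertices
reachable from `u` inside `S - v` form a connected set `C ∋ u`, and `S \ C ∋ v` is connected as
well. Since `S = C ∪ (S \ C)`, the number `c_v(n + 1)` of connected `(n + 1)`-sets through `v`
satisfies `c_v(n + 2) ≤ ∑_{u ~ v} ∑_{i + j = n} c_u(i + 1) c_v(j + 1)`, the Catalan recursion.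
Hence `c_v(n + 1) ≤ d^n Cat(n) ≤ (4d)^n` in a graph of maximum degree `d`.
-/

open Finset

theorem catalan_le_four_pow (n : ℕ) : catalan n ≤ 4 ^ n :=
  calc catalan n ≤ (n + 1) * catalan n := Nat.le_mul_of_pos_left _ n.succ_pos
    _ = n.centralBinom := succ_mul_catalan_eq_centralBinom n
    _ ≤ 4 ^ n := Nat.centralBinom_le_four_pow n

namespace SimpleGraph

variable {V : Type*} (G : SimpleGraph V)

section Walks

variable {G}

theorem exists_walk_of_connected_induce {s : Set V} (hs : (G.induce s).Connected) {x y : V}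
    (hx : x ∈ s) (hy : y ∈ s) : ∃ w : G.Walk x y, ∀ z ∈ w.support, z ∈ s := by
  obtain ⟨w⟩ := hs.preconnected ⟨x, hx⟩ ⟨y, hy⟩
  refine ⟨w.map (Embedding.induce s).toHom, fun z hz => ?_⟩
  obtain ⟨⟨z, hzs⟩, -, rfl⟩ := List.mem_map.1 (Walk.support_map _ w ▸ hz)
  exact hzs

theorem connected_induce_of_forall_walk {s : Set V} {u : V} (hu : u ∈ s)
    (h : ∀ x ∈ s, ∃ w : G.Walk u x, ∀ z ∈ w.support, z ∈ s) : (G.induce s).Connected :=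
  G.induce_connected_of_patches u hu fun hx => by
    obtain ⟨w, hw⟩ := h _ hx
    exact ⟨{z | z ∈ w.support}, hw, w.start_mem_support, w.end_mem_support,
      w.connected_induce_support.preconnected _ _⟩

theorem exists_adj_of_connected_induce {s : Set V} (hs : (G.induce s).Connected) {r x : V}
    (hr : r ∈ s) (hx : x ∈ s) (hxr : x ≠ r) : ∃ u ∈ s, G.Adj r u := by
  obtain ⟨w, hw⟩ := exists_walk_of_connected_induce hs hr hx
  cases w with
  | nil => exact absurd rfl hxr
  | cons hadj w => exact ⟨_, hw _ (by simp), hadj⟩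

/-- Truncate the walk at its first visit to `r`: before that it cannot enter `C`. -/
theorem exists_walk_diff_of_closed {s C : Set V} {r : V}
    (hC : ∀ a c, G.Adj a c → c ∈ C → a ∈ s → a ≠ r → a ∈ C) {x : V} (w : G.Walk x r)
    (hw : ∀ z ∈ w.support, z ∈ s) (hx : x ∈ s \ C) :
    ∃ w' : G.Walk x r, ∀ z ∈ w'.support, z ∈ s \ C := by
  induction w with
  | nil => exact ⟨Walk.nil, by simpa using hx⟩
  | @cons a c b hadj w ih =>
    by_cases hab : a = b
    · exact ⟨Walk.nil.copy rfl hab, by simpa using hx⟩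
    have hc : c ∈ s \ C :=
      ⟨hw c (by simp), fun hcC => hx.2 (hC a c hadj hcC hx.1 hab)⟩
    obtain ⟨w', hw'⟩ := ih hC (fun z hz => hw z (by simp [hz])) hc
    exact ⟨Walk.cons hadj w', List.forall_mem_cons.2 ⟨hx, hw'⟩⟩

end Walks

/-- `C` is the component of `u` in `S - r`; the rest `S \ C` stays connected because `r` is its
only vertex with a neighbour in `C`. -/
theorem exists_connected_split {S : Set V} (hS : (G.induce S).Connected) {r u : V} (hr : r ∈ S)
    (hu : u ∈ S) (hru : G.Adj r u) :
    ∃ C ⊆ S, u ∈ C ∧ r ∉ C ∧ (G.induce C).Connected ∧ (G.induce (S \ C)).Connected := by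
  classical
  set C := {x | ∃ w : G.Walk u x, ∀ z ∈ w.support, z ∈ S \ {r}}
  have hCS : C ⊆ S \ {r} := fun x ⟨w, hw⟩ => hw x w.end_mem_support
  have huC : u ∈ C := ⟨Walk.nil, by simpa using ⟨hu, hru.ne'⟩⟩
  have hrC : r ∉ C := fun hrC => (hCS hrC).2 rfl
  have hC : (G.induce C).Connected :=
    connected_induce_of_forall_walk huC fun x ⟨w, hw⟩ => ⟨w, fun z hz =>
      ⟨w.takeUntil z hz, fun y hy => hw y (w.support_takeUntil_subset_support hz hy)⟩⟩
  have hclosed : ∀ a c, G.Adj a c → c ∈ C → a ∈ S → a ≠ r → a ∈ C :=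
    fun a c hac ⟨w, hw⟩ haS har => ⟨w.concat hac.symm, by
      simpa [Walk.support_concat, or_imp, forall_and, haS, har] using hw⟩
  refine ⟨C, fun x hx => (hCS hx).1, huC, hrC, hC,
    connected_induce_of_forall_walk ⟨hr, hrC⟩ fun x hx => ?_⟩
  obtain ⟨w, hw⟩ := exists_walk_of_connected_induce hS hx.1 hr
  obtain ⟨w', hw'⟩ := exists_walk_diff_of_closed hclosed w hw hx
  exact ⟨w'.reverse, by simpa using hw'⟩

section Counting

variable [Fintype V]

open Classical in
noncomputable def connectedSetsOfCard (v : V) (n : ℕ) : Finset (Finset V) :=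
  {S ∈ univ.powersetCard n | v ∈ S ∧ (G.induce (S : Set V)).Connected}

variable {G} in
theorem mem_connectedSetsOfCard {v : V} {n : ℕ} {S : Finset V} :
    S ∈ G.connectedSetsOfCard v n ↔ S.card = n ∧ v ∈ S ∧ (G.induce (S : Set V)).Connected := by
  simp [connectedSetsOfCard]

theorem coe_connectedSetsOfCard (v : V) (n : ℕ) :
    (G.connectedSetsOfCard v n : Set (Finset V)) =
      {S : Finset V | S.card = n ∧ v ∈ S ∧ (G.induce (S : Set V)).Connected} := by
  ext S
  exact mem_connectedSetsOfCard

theorem connectedSetsOfCard_zero (v : V) : G.connectedSetsOfCard v 0 = ∅ :=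
  eq_empty_of_forall_notMem fun S hS => by
    obtain ⟨hcard, hv, -⟩ := mem_connectedSetsOfCard.1 hS
    simp [card_eq_zero.1 hcard] at hv

theorem card_connectedSetsOfCard_one_le (v : V) : #(G.connectedSetsOfCard v 1) ≤ 1 :=
  card_le_one.2 fun S hS T hT => by
    obtain ⟨hS, hvS, -⟩ := mem_connectedSetsOfCard.1 hS
    obtain ⟨hT, hvT, -⟩ := mem_connectedSetsOfCard.1 hT
    rw [card_eq_one] at hS hT
    obtain ⟨a, rfl⟩ := hS
    obtain ⟨b, rfl⟩ := hT
    rw [mem_singleton] at hvS hvT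
    rw [← hvS, ← hvT]

theorem card_connectedSetsOfCard_add_two_le [DecidableRel G.Adj] (v : V) (n : ℕ) :
    #(G.connectedSetsOfCard v (n + 2)) ≤
      ∑ u ∈ G.neighborFinset v, ∑ ij ∈ antidiagonal n,
        #(G.connectedSetsOfCard u (ij.1 + 1)) * #(G.connectedSetsOfCard v (ij.2 + 1)) := by
  classical
  calc #(G.connectedSetsOfCard v (n + 2))
      ≤ #((G.neighborFinset v).biUnion fun u => (antidiagonal n).biUnion fun ij =>
          (G.connectedSetsOfCard u (ij.1 + 1) ×ˢ G.connectedSetsOfCard v (ij.2 + 1)).image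
            fun CD => CD.1 ∪ CD.2) := by
        refine card_le_card fun S hS => ?_
        obtain ⟨hcard, hvS, hS⟩ := mem_connectedSetsOfCard.1 hS
        obtain ⟨x, hxS, hxv⟩ := exists_mem_ne (by omega : 1 < S.card) v
        obtain ⟨u, huS, hvu⟩ := exists_adj_of_connected_induce hS hvS hxS hxv
        obtain ⟨C, hCS, huC, hvC, hC, hD⟩ := G.exists_connected_split hS hvS huS hvu
        obtain ⟨C, rfl⟩ := ((S.finite_toSet.subset hCS).exists_finset_coe)
        rw [coe_subset] at hCS
        have hCpos : 0 < C.card := card_pos.2 ⟨u, huC⟩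
        have hDpos : 0 < (S \ C).card := card_pos.2 ⟨v, mem_sdiff.2 ⟨hvS, hvC⟩⟩
        have hsum := card_sdiff_add_card_eq_card hCS
        simp only [mem_biUnion, mem_image, mem_product, HasAntidiagonal.mem_antidiagonal,
          mem_neighborFinset, Prod.exists, mem_connectedSetsOfCard]
        refine ⟨u, hvu, C.card - 1, (S \ C).card - 1, by omega, C, S \ C,
          ⟨⟨by omega, huC, hC⟩, by omega, mem_sdiff.2 ⟨hvS, hvC⟩, by rwa [coe_sdiff]⟩,
          union_sdiff_of_subset hCS⟩
    _ ≤ _ := card_biUnion_le.trans <| sum_le_sum fun u _ =>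
        card_biUnion_le.trans <| sum_le_sum fun ij _ => card_image_le.trans (card_product _ _).le

theorem card_connectedSetsOfCard_succ_le [DecidableRel G.Adj] {d : ℕ}
    (hdeg : ∀ v, G.degree v ≤ d) (v : V) (n : ℕ) :
    #(G.connectedSetsOfCard v (n + 1)) ≤ d ^ n * catalan n := by
  induction n using Nat.strong_induction_on generalizing v with
  | _ n ih =>
    rcases n with _ | m
    · simpa using G.card_connectedSetsOfCard_one_le v
    calc #(G.connectedSetsOfCard v (m + 2))
        ≤ ∑ u ∈ G.neighborFinset v, ∑ ij ∈ antidiagonal m,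
            d ^ ij.1 * catalan ij.1 * (d ^ ij.2 * catalan ij.2) :=
          (G.card_connectedSetsOfCard_add_two_le v m).trans <| sum_le_sum fun u _ =>
            sum_le_sum fun ij hij => by
              have := HasAntidiagonal.mem_antidiagonal.1 hij
              exact Nat.mul_le_mul (ih ij.1 (by omega) u) (ih ij.2 (by omega) v)
      _ = G.degree v * ∑ ij ∈ antidiagonal m, d ^ m * (catalan ij.1 * catalan ij.2) := by
          rw [sum_const, card_neighborFinset_eq_degree, smul_eq_mul]
          refine congrArg _ (sum_congr rfl fun ij hij => ?_)
          rw [← HasAntidiagonal.mem_antidiagonal.1 hij, pow_add]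
          ring
      _ = G.degree v * (d ^ m * catalan (m + 1)) := by rw [catalan_succ', ← mul_sum]
      _ ≤ d * (d ^ m * catalan (m + 1)) := Nat.mul_le_mul_right _ (hdeg v)
      _ = d ^ (m + 1) * catalan (m + 1) := by ring

end Counting

end SimpleGraph

theorem stmt_1_general {V : Type*} [Fintype V] (G : SimpleGraph V) [DecidableRel G.Adj]
    (d : ℕ) (hreg : G.IsRegularOfDegree d) (v : V) (s : ℕ) :
    {S : Finset V | S.card = s ∧ v ∈ S ∧ (G.induce (S : Set V)).Connected}.ncard ≤
      (4 * d) ^ (s - 1) := by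
  rw [← G.coe_connectedSetsOfCard, Set.ncard_coe_finset]
  rcases s with _ | n
  · simp [G.connectedSetsOfCard_zero]
  calc #(G.connectedSetsOfCard v (n + 1)) ≤ d ^ n * catalan n :=
        G.card_connectedSetsOfCard_succ_le (fun w => (hreg w).le) v n
    _ ≤ d ^ n * 4 ^ n := Nat.mul_le_mul_left _ (catalan_le_four_pow n)
    _ = (4 * d) ^ (n + 1 - 1) := by rw [Nat.add_sub_cancel, mul_pow, mul_comm]

/-- The number of connected vertex subsets of size `s` containing `v` in a finite
`d`-regular graph is at most `(4d)^(s-1)`. -/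
theorem stmt_1 {V : Type*} [Fintype V] [DecidableEq V] (G : SimpleGraph V) [DecidableRel G.Adj]
    (d : ℕ) (hd : 1 ≤ d) (hreg : G.IsRegularOfDegree d) (v : V) (s : ℕ) (hs : 1 ≤ s) :
    {S : Finset V | S.card = s ∧ v ∈ S ∧ (G.induce (S : Set V)).Connected}.ncard ≤
      (4 * d) ^ (s - 1) :=
  stmt_1_general G d hreg v s
end

section
/- Let n be a positive integer and let X be a binomial random variable with parameters n and p = δ/d, where 0 < δ ≤ d. Then the probability that X ≤ (δ/(2 log 2 d))·n - (log(10d)/log 2)·m is at most (10d)^{-m}, for any positive real m. -/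
/-!
Markov's inequality applied to `2 ^ (-X)`: on the event `X ≤ t` one has `1 ≤ 2 ^ (t - X)`, and
`E[2 ^ (-X)] = (1 - p/2) ^ n ≤ exp (-p n / 2)`. With `p = δ/d` and the given threshold `t`, the
exponent `t log 2 - p n / 2` is exactly `-m log (10 d)`.
-/

open Finset Real

lemma sum_choose_mul_pow_div_pow (n : ℕ) (p c : ℝ) :
    ∑ k ∈ range (n + 1), (n.choose k : ℝ) * p ^ k * (1 - p) ^ (n - k) / c ^ k
      = (p / c + (1 - p)) ^ n := by
  rw [add_pow]
  refine sum_congr rfl fun k _ => ?_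
  rw [div_pow]
  ring

theorem binomial_lowerTail_le_rpow_mul {n : ℕ} {p c : ℝ} (hp0 : 0 ≤ p) (hp1 : p ≤ 1)
    (hc : 1 ≤ c) (t : ℝ) :
    (∑ k ∈ range (n + 1),
      if (k : ℝ) ≤ t then (n.choose k : ℝ) * p ^ k * (1 - p) ^ (n - k) else 0)
      ≤ c ^ t * (p / c + (1 - p)) ^ n := by
  rw [← sum_choose_mul_pow_div_pow, mul_sum]
  refine sum_le_sum fun k _ => ?_
  have hc0 : 0 < c := zero_lt_one.trans_le hc
  have hw : 0 ≤ (n.choose k : ℝ) * p ^ k * (1 - p) ^ (n - k) :=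
    mul_nonneg (by positivity) (pow_nonneg (sub_nonneg.2 hp1) _)
  split_ifs with hk
  · calc _ ≤ (n.choose k : ℝ) * p ^ k * (1 - p) ^ (n - k) * c ^ (t - k) :=
          le_mul_of_one_le_right hw (one_le_rpow hc (sub_nonneg.2 hk))
      _ = _ := by rw [rpow_sub hc0, rpow_natCast]; ring
  · exact mul_nonneg (rpow_nonneg hc0.le t) (div_nonneg hw (by positivity))

lemma one_sub_pow_le_exp_neg_mul {x : ℝ} (hx : x ≤ 1) (n : ℕ) :
    (1 - x) ^ n ≤ exp (-(x * n)) := by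
  calc (1 - x) ^ n ≤ exp (-x) ^ n :=
        pow_le_pow_left₀ (sub_nonneg.2 hx) (by linarith [add_one_le_exp (-x)]) n
    _ = exp (-(x * n)) := by rw [← exp_nat_mul]; ring_nf

theorem stmt_5_general (n d : ℕ) (δ : ℝ) (hδ : 0 < δ) (hδd : δ ≤ d)
    (m : ℝ) :
    (∑ k ∈ Finset.range (n + 1),
      if (k : ℝ) ≤ δ / (2 * Real.log 2 * d) * n - Real.log (10 * d) / Real.log 2 * m
        then (n.choose k : ℝ) * (δ / d) ^ k * (1 - δ / d) ^ (n - k) else 0)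
      ≤ (10 * (d : ℝ)) ^ (-m) := by
  have hd : (0 : ℝ) < d := hδ.trans_le hδd
  have hp1 : δ / d ≤ 1 := div_le_one_of_le₀ hδd hd.le
  refine (binomial_lowerTail_le_rpow_mul (by positivity) hp1 one_le_two _).trans ?_
  have hlog2 : 0 < log 2 := log_pos one_lt_two
  calc _ = 2 ^ (δ / (2 * log 2 * d) * n - log (10 * d) / log 2 * m) * (1 - δ / d / 2) ^ n := by
        ring_nf
    _ ≤ 2 ^ (δ / (2 * log 2 * d) * n - log (10 * d) / log 2 * m) * exp (-(δ / d / 2 * n)) := by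
        gcongr
        exact one_sub_pow_le_exp_neg_mul (by linarith) n
    _ = _ := by
        rw [rpow_def_of_pos two_pos, rpow_def_of_pos (by positivity), ← exp_add]
        congr 1
        field_simp
        ring

/-- Chernoff-type bound: if `X` is binomial with parameters `n` and `p = δ/d`, then
`P(X ≤ (δ/(2 log 2 · d)) n - (log(10d)/log 2) m) ≤ (10d)^(-m)` for any real `m > 0`. -/
theorem stmt_5 (n d : ℕ) (hd : 1 ≤ d) (δ : ℝ) (hδ : 0 < δ) (hδd : δ ≤ d)
    (m : ℝ) (hm : 0 < m) :
    (∑ k ∈ Finset.range (n + 1),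
      if (k : ℝ) ≤ δ / (2 * Real.log 2 * d) * n - Real.log (10 * d) / Real.log 2 * m
        then (n.choose k : ℝ) * (δ / d) ^ k * (1 - δ / d) ^ (n - k) else 0)
      ≤ (10 * (d : ℝ)) ^ (-m) :=
  stmt_5_general n d δ hδ hδd m
end

section
/- Lovász Local Lemma (variable version, general form): Let A₁,...,Aₙ be events in a probability space, each Aᵢ mutually independent of all Aⱼ outside its neighborhood Γ(i). If there exist x(Aᵢ) ∈ (0,1) with P(Aᵢ) ≤ x(Aᵢ)·∏_{j ∈ Γ(i)}(1 - x(Aⱼ)) for all i, then P(⋂ᵢ Aᵢᶜ) ≥ ∏ᵢ (1 - x(Aᵢ)) > 0. -/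
open MeasureTheory

/-- One peeling step: if the key conditional bound holds for `(i, S)`, then
adding `(A i)ᶜ` to the intersection costs at most a factor `(1 - x i)`. -/
lemma lll_peel {Ω : Type*} [MeasurableSpace Ω] (μ : Measure Ω) [IsProbabilityMeasure μ]
    {n : ℕ} (A : Fin n → Set Ω) (hAm : ∀ i, MeasurableSet (A i)) (x : Fin n → ℝ)
    (S : Finset (Fin n)) (i : Fin n)
    (hkey : (μ (A i ∩ ⋂ j ∈ S, (A j)ᶜ)).toReal ≤ x i * (μ (⋂ j ∈ S, (A j)ᶜ)).toReal) :
    (1 - x i) * (μ (⋂ j ∈ S, (A j)ᶜ)).toReal ≤ (μ (⋂ j ∈ insert i S, (A j)ᶜ)).toReal := by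
  have hsplit : μ (⋂ j ∈ S, (A j)ᶜ)
      = μ (A i ∩ ⋂ j ∈ S, (A j)ᶜ) + μ (⋂ j ∈ insert i S, (A j)ᶜ) := by
    rw [Finset.set_biInter_insert]
    have h := measure_inter_add_diff (μ := μ) (⋂ j ∈ S, (A j)ᶜ) (hAm i)
    rw [Set.inter_comm, Set.diff_eq, Set.inter_comm _ (A i)ᶜ] at h
    exact h.symm
  have h2 : (μ (⋂ j ∈ S, (A j)ᶜ)).toReal
      = (μ (A i ∩ ⋂ j ∈ S, (A j)ᶜ)).toReal + (μ (⋂ j ∈ insert i S, (A j)ᶜ)).toReal := by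
    rw [hsplit, ENNReal.toReal_add (measure_ne_top μ _) (measure_ne_top μ _)]
  nlinarith [h2, hkey]

/-- Key lemma of the Lovász Local Lemma, by strong induction on `S`. -/
lemma lll_key {Ω : Type*} [MeasurableSpace Ω] (μ : Measure Ω) [IsProbabilityMeasure μ]
    {n : ℕ} (A : Fin n → Set Ω) (hAm : ∀ i, MeasurableSet (A i))
    (Γ : Fin n → Finset (Fin n))
    (hindep : ∀ i, ∀ J : Finset (Fin n), (∀ j ∈ J, j ∉ Γ i ∧ j ≠ i) →
      μ (A i ∩ ⋂ j ∈ J, (A j)ᶜ) = μ (A i) * μ (⋂ j ∈ J, (A j)ᶜ))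
    (x : Fin n → ℝ) (hx : ∀ i, x i ∈ Set.Ioo (0 : ℝ) 1)
    (hP : ∀ i, μ (A i) ≤ ENNReal.ofReal (x i * ∏ j ∈ Γ i, (1 - x j)))
    (S : Finset (Fin n)) : ∀ i ∉ S,
    (μ (A i ∩ ⋂ j ∈ S, (A j)ᶜ)).toReal ≤ x i * (μ (⋂ j ∈ S, (A j)ᶜ)).toReal := by
  induction S using Finset.strongInduction with
  | _ S IH =>
    intro i hi
    have hx1 : ∀ j, 0 ≤ 1 - x j := fun j => by have := (hx j).2; linarith
    have hx1' : ∀ j, 1 - x j ≤ 1 := fun j => by have := (hx j).1; linarith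
    set S₂ : Finset (Fin n) := S \ Γ i with hS₂def
    set S₁ : Finset (Fin n) := S ∩ Γ i with hS₁def
    -- subclaim: peel the elements of S₁ off one at a time
    have sub : ∀ T : Finset (Fin n), T ⊆ S₁ →
        (∏ j ∈ T, (1 - x j)) * (μ (⋂ j ∈ S₂, (A j)ᶜ)).toReal
          ≤ (μ (⋂ j ∈ S₂ ∪ T, (A j)ᶜ)).toReal := by
      intro T
      induction T using Finset.induction_on with
      | empty => intro _; simp
      | @insert j T hjT ih =>
        intro hins
        have hjS₁ : j ∈ S₁ := hins (Finset.mem_insert_self j T)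
        have hTs : T ⊆ S₁ := fun a ha => hins (Finset.mem_insert_of_mem ha)
        have hjΓ : j ∈ Γ i := (Finset.mem_inter.mp hjS₁).2
        have hjS : j ∈ S := (Finset.mem_inter.mp hjS₁).1
        have hjS₂ : j ∉ S₂ := fun h => (Finset.mem_sdiff.mp h).2 hjΓ
        have hjU : j ∉ S₂ ∪ T := by
          simp only [Finset.mem_union]; rintro (h | h); exact hjS₂ h; exact hjT h
        have hUS : S₂ ∪ T ⊆ S := by
          intro a ha
          rcases Finset.mem_union.mp ha with h | h
          · exact (Finset.mem_sdiff.mp h).1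
          · exact (Finset.mem_inter.mp (hTs h)).1
        have hUS' : S₂ ∪ T ⊂ S := ⟨hUS, fun h => hjU (h hjS)⟩
        have hkey := IH _ hUS' j hjU
        have hpeel := lll_peel μ A hAm x (S₂ ∪ T) j hkey
        have hU : S₂ ∪ insert j T = insert j (S₂ ∪ T) := Finset.union_insert j S₂ T
        rw [hU, Finset.prod_insert hjT]
        calc (1 - x j) * (∏ j ∈ T, (1 - x j)) * (μ (⋂ j ∈ S₂, (A j)ᶜ)).toReal
            = (1 - x j) * ((∏ j ∈ T, (1 - x j)) * (μ (⋂ j ∈ S₂, (A j)ᶜ)).toReal) := by ring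
          _ ≤ (1 - x j) * (μ (⋂ j ∈ S₂ ∪ T, (A j)ᶜ)).toReal :=
              mul_le_mul_of_nonneg_left (ih hTs) (hx1 j)
          _ ≤ _ := hpeel
    have hS2S1 : S₂ ∪ S₁ = S := by
      rw [hS₂def, hS₁def]
      ext a
      simp only [Finset.mem_union, Finset.mem_sdiff, Finset.mem_inter]
      tauto
    have h1 : (∏ j ∈ S₁, (1 - x j)) * (μ (⋂ j ∈ S₂, (A j)ᶜ)).toReal
        ≤ (μ (⋂ j ∈ S, (A j)ᶜ)).toReal := by
      have := sub S₁ le_rfl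
      rwa [hS2S1] at this
    have hsubΓ : S₁ ⊆ Γ i := Finset.inter_subset_right
    have h2 : (∏ j ∈ Γ i, (1 - x j)) ≤ ∏ j ∈ S₁, (1 - x j) := by
      rw [← Finset.prod_sdiff hsubΓ]
      have hle1 : ∏ j ∈ Γ i \ S₁, (1 - x j) ≤ 1 :=
        Finset.prod_le_one (fun j _ => hx1 j) (fun j _ => hx1' j)
      have hnn : 0 ≤ ∏ j ∈ S₁, (1 - x j) := Finset.prod_nonneg (fun j _ => hx1 j)
      nlinarith [Finset.prod_nonneg (fun j (_ : j ∈ Γ i \ S₁) => hx1 j)]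
    -- independence over S₂
    have hind : μ (A i ∩ ⋂ j ∈ S₂, (A j)ᶜ) = μ (A i) * μ (⋂ j ∈ S₂, (A j)ᶜ) := by
      exact hindep i S₂ (fun j hj => ⟨(Finset.mem_sdiff.mp hj).2,
        by rintro rfl; exact hi (Finset.mem_sdiff.mp hj).1⟩)
    have hmono : (μ (A i ∩ ⋂ j ∈ S, (A j)ᶜ)).toReal ≤ (μ (A i ∩ ⋂ j ∈ S₂, (A j)ᶜ)).toReal := by
      refine ENNReal.toReal_mono (measure_ne_top μ _) (measure_mono ?_)
      refine Set.inter_subset_inter_right _ ?_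
      intro ω hω
      simp only [Set.mem_iInter] at hω ⊢
      exact fun j hj => hω j ((Finset.mem_sdiff.mp hj).1)
    have hprodpos : 0 ≤ x i * ∏ j ∈ Γ i, (1 - x j) := by
      have := (hx i).1
      have : (0:ℝ) < ∏ j ∈ Γ i, (1 - x j) :=
        Finset.prod_pos (fun j _ => by have := (hx j).2; linarith)
      nlinarith [(hx i).1]
    have hPA : (μ (A i)).toReal ≤ x i * ∏ j ∈ Γ i, (1 - x j) := by
      have := ENNReal.toReal_mono (by simp) (hP i)
      rwa [ENNReal.toReal_ofReal hprodpos] at this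
    have hP₂ : (0:ℝ) ≤ (μ (⋂ j ∈ S₂, (A j)ᶜ)).toReal := ENNReal.toReal_nonneg
    calc (μ (A i ∩ ⋂ j ∈ S, (A j)ᶜ)).toReal
        ≤ (μ (A i ∩ ⋂ j ∈ S₂, (A j)ᶜ)).toReal := hmono
      _ = (μ (A i)).toReal * (μ (⋂ j ∈ S₂, (A j)ᶜ)).toReal := by
          rw [hind, ENNReal.toReal_mul]
      _ ≤ (x i * ∏ j ∈ Γ i, (1 - x j)) * (μ (⋂ j ∈ S₂, (A j)ᶜ)).toReal :=
          mul_le_mul_of_nonneg_right hPA hP₂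
      _ = x i * ((∏ j ∈ Γ i, (1 - x j)) * (μ (⋂ j ∈ S₂, (A j)ᶜ)).toReal) := by ring
      _ ≤ x i * ((∏ j ∈ S₁, (1 - x j)) * (μ (⋂ j ∈ S₂, (A j)ᶜ)).toReal) := by
          have := (hx i).1
          exact mul_le_mul_of_nonneg_left (mul_le_mul_of_nonneg_right h2 hP₂) (le_of_lt this)
      _ ≤ x i * (μ (⋂ j ∈ S, (A j)ᶜ)).toReal :=
          mul_le_mul_of_nonneg_left h1 (le_of_lt (hx i).1)

/-- Lovász Local Lemma (general form). -/
theorem stmt_16 {Ω : Type*} [MeasurableSpace Ω] (μ : Measure Ω) [IsProbabilityMeasure μ]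
    (n : ℕ) (A : Fin n → Set Ω) (hAm : ∀ i, MeasurableSet (A i))
    (Γ : Fin n → Finset (Fin n)) (hΓ : ∀ i, i ∉ Γ i)
    (hindep : ∀ i, ∀ J : Finset (Fin n), (∀ j ∈ J, j ∉ Γ i ∧ j ≠ i) →
      μ (A i ∩ ⋂ j ∈ J, (A j)ᶜ) = μ (A i) * μ (⋂ j ∈ J, (A j)ᶜ))
    (x : Fin n → ℝ) (hx : ∀ i, x i ∈ Set.Ioo (0 : ℝ) 1)
    (hP : ∀ i, μ (A i) ≤ ENNReal.ofReal (x i * ∏ j ∈ Γ i, (1 - x j))) :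
    ENNReal.ofReal (∏ i, (1 - x i)) ≤ μ (⋂ i, (A i)ᶜ) ∧ 0 < μ (⋂ i, (A i)ᶜ) := by
  have main : ∀ S : Finset (Fin n),
      ∏ j ∈ S, (1 - x j) ≤ (μ (⋂ j ∈ S, (A j)ᶜ)).toReal := by
    intro S
    induction S using Finset.induction_on with
    | empty => simp
    | @insert i S hiS ih =>
      have hkey := lll_key μ A hAm Γ hindep x hx hP S i hiS
      have hpeel := lll_peel μ A hAm x S i hkey
      rw [Finset.prod_insert hiS]
      calc (1 - x i) * ∏ j ∈ S, (1 - x j)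
          ≤ (1 - x i) * (μ (⋂ j ∈ S, (A j)ᶜ)).toReal :=
            mul_le_mul_of_nonneg_left ih (by have := (hx i).2; linarith)
        _ ≤ _ := hpeel
  have huniv : (⋂ i, (A i)ᶜ) = ⋂ j ∈ (Finset.univ : Finset (Fin n)), (A j)ᶜ := by simp
  have h1 : ENNReal.ofReal (∏ i, (1 - x i)) ≤ μ (⋂ i, (A i)ᶜ) := by
    rw [huniv]
    calc ENNReal.ofReal (∏ i, (1 - x i))
        ≤ ENNReal.ofReal ((μ (⋂ j ∈ (Finset.univ : Finset (Fin n)), (A j)ᶜ)).toReal) :=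
          ENNReal.ofReal_le_ofReal (main Finset.univ)
      _ = μ (⋂ j ∈ (Finset.univ : Finset (Fin n)), (A j)ᶜ) :=
          ENNReal.ofReal_toReal (measure_ne_top μ _)
  refine ⟨h1, lt_of_lt_of_le ?_ h1⟩
  exact ENNReal.ofReal_pos.mpr (Finset.prod_pos (fun j _ => by have := (hx j).2; linarith))
end
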